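/- (Soundness of SL*.) For all 1-free star expressions r1, r2 ∈ StExp, if SL* ⊢ r1 = r2, then r1 and r2 are bisimilar as states of the syntactic chart (StExp, δ). -/

import Mathlib

/-- A chart over action alphabet `Act` with state space `X`: each state is assigned a
finite set of transitions, either `(a, none)` (i.e. `x →a ✓`) or `(a, some y)` (i.e. `x →a y`). -/
structure Chart (Act X : Type) where
  tr : X → Finset (Act × Option X)

/-- `x →a ✓` in the chart `C`. -/
def Chart.Halts {Act X : Type} (C : Chart Act X) (x : X) : Prop :=
  ∃ a : Act, (a, (none : Option X)) ∈ C.tr x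

/-- `x → y` (for some action) in the chart `C`. -/
def Chart.StepRel {Act X : Type} (C : Chart Act X) (x y : X) : Prop :=
  ∃ a : Act, (a, some y) ∈ C.tr x

/-- `R` is a bisimulation between the charts `C` and `D`. -/
def IsBisim {Act X Y : Type} (C : Chart Act X) (D : Chart Act Y) (R : X → Y → Prop) : Prop :=
  ∀ x y, R x y → ∀ a : Act,
    (((a, (none : Option X)) ∈ C.tr x) ↔ ((a, (none : Option Y)) ∈ D.tr y)) ∧
    (∀ x', (a, some x') ∈ C.tr x → ∃ y', (a, some y') ∈ D.tr y ∧ R x' y') ∧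
    (∀ y', (a, some y') ∈ D.tr y → ∃ x', (a, some x') ∈ C.tr x ∧ R x' y')

/-- States `x` of `C` and `y` of `D` are bisimilar. -/
def Bisimilar {Act X Y : Type} (C : Chart Act X) (D : Chart Act Y) (x : X) (y : Y) : Prop :=
  ∃ R, IsBisim C D R ∧ R x y

/-- A chart homomorphism is a function whose graph is a bisimulation. -/
def IsChartHom {Act X Y : Type} (C : Chart Act X) (D : Chart Act Y) (h : X → Y) : Prop :=
  IsBisim C D (fun x y => h x = y)

/-- 1-free star expressions over the alphabet `Act`. -/
inductive StExp (Act : Type) : Type where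
  | zero : StExp Act
  | act : Act → StExp Act
  | add : StExp Act → StExp Act → StExp Act
  | mul : StExp Act → StExp Act → StExp Act
  | star : StExp Act → StExp Act → StExp Act
deriving DecidableEq

/-- Continuation after a transition of the left operand: `✓` continues as `s`,
and a state `t` continues as `t·s`. -/
def StExp.seqAfter {Act : Type} (s : StExp Act) : Option (StExp Act) → StExp Act
  | none => s
  | some t => t.mul s

/-- The transition function of the syntactic chart, following Antimirov-style rules. -/
def StExp.tr {Act : Type} [DecidableEq Act] : StExp Act → Finset (Act × Option (StExp Act))
  | .zero => ∅
  | .act a => {(a, none)}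
  | .add r s => r.tr ∪ s.tr
  | .mul r s => r.tr.image (fun p => (p.1, some (StExp.seqAfter s p.2)))
  | .star r s =>
      (r.tr.image (fun p => (p.1, some (StExp.seqAfter (StExp.star r s) p.2)))) ∪ s.tr

/-- The syntactic chart `(StExp, δ)`. -/
def synChart (Act : Type) [DecidableEq Act] : Chart Act (StExp Act) := ⟨StExp.tr⟩

/-- Derivability `SL* ⊢ r = s` from Grabmayer and Fokkink's axioms together with
the laws of equational logic. -/
inductive SLEq {Act : Type} : StExp Act → StExp Act → Prop where
  | add_comm (x y : StExp Act) : SLEq (x.add y) (y.add x)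
  | add_assoc (x y z : StExp Act) : SLEq ((x.add y).add z) (x.add (y.add z))
  | add_idem (x : StExp Act) : SLEq (x.add x) x
  | add_zero (x : StExp Act) : SLEq (x.add .zero) x
  | right_distrib (x y z : StExp Act) : SLEq ((x.add y).mul z) ((x.mul z).add (y.mul z))
  | mul_assoc (x y z : StExp Act) : SLEq ((x.mul y).mul z) (x.mul (y.mul z))
  | zero_mul (x : StExp Act) : SLEq (StExp.zero.mul x) .zero
  | star_unfold (x y : StExp Act) : SLEq (x.star y) ((x.mul (x.star y)).add y)
  | fixpoint {x y z : StExp Act} : SLEq x ((y.mul x).add z) → SLEq x (y.star z)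
  | refl (x : StExp Act) : SLEq x x
  | symm {x y : StExp Act} : SLEq x y → SLEq y x
  | trans {x y z : StExp Act} : SLEq x y → SLEq y z → SLEq x z
  | add_congr {x x' y y' : StExp Act} : SLEq x x' → SLEq y y' → SLEq (x.add y) (x'.add y')
  | mul_congr {x x' y y' : StExp Act} : SLEq x x' → SLEq y y' → SLEq (x.mul y) (x'.mul y')
  | star_congr {x x' y y' : StExp Act} : SLEq x x' → SLEq y y' → SLEq (x.star y) (x'.star y')

/-!
Bisimilarity is an equivalence, and every axiom and rule of `SL*` preserves it. Each case is
settled by a bisimulation up to bisimilarity: a relation `R` such that the transitions of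
`R`-related states can be matched up to `∼ R⁼ ∼`. Matching transition sets is the Egli–Milner
lifting of a relation, which commutes with the unions and images that build `StExp.tr`, so the
matching follows the structure of the expressions. For the fixpoint rule the relation is
`{(y·x + z, y*z)} ∪ {(s·x, s·(y*z))}`: the transitions of `y·x + z` and `y*z` agree up to
replacing `x` by `y*z`, and `x ∼ y·x + z` closes the loop.
-/

open Relation

namespace Finset

variable {α β γ δ : Type*}

/-- The Egli–Milner lifting of a relation to finite sets. -/
def LiftRel (T : α → β → Prop) (s : Finset α) (t : Finset β) : Prop :=
  (∀ p ∈ s, ∃ q ∈ t, T p q) ∧ ∀ q ∈ t, ∃ p ∈ s, T p q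

namespace LiftRel

variable {T T' : α → β → Prop} {s s' : Finset α} {t t' : Finset β}

theorem mono (hT : ∀ p q, T p q → T' p q) (h : LiftRel T s t) : LiftRel T' s t :=
  ⟨fun p hp => (h.1 p hp).imp fun _ ⟨hq, hpq⟩ => ⟨hq, hT _ _ hpq⟩,
    fun q hq => (h.2 q hq).imp fun _ ⟨hp, hpq⟩ => ⟨hp, hT _ _ hpq⟩⟩

theorem refl {T : α → α → Prop} (hT : ∀ p, T p p) (s : Finset α) : LiftRel T s s :=
  ⟨fun p hp => ⟨p, hp, hT p⟩, fun q hq => ⟨q, hq, hT q⟩⟩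

theorem comp {U : β → γ → Prop} {u : Finset γ} (h : LiftRel T s t) (h' : LiftRel U t u) :
    LiftRel (Comp T U) s u := by
  refine ⟨fun p hp => ?_, fun r hr => ?_⟩
  · obtain ⟨q, hq, hpq⟩ := h.1 p hp
    obtain ⟨r, hr, hqr⟩ := h'.1 q hq
    exact ⟨r, hr, q, hpq, hqr⟩
  · obtain ⟨q, hq, hqr⟩ := h'.2 r hr
    obtain ⟨p, hp, hpq⟩ := h.2 q hq
    exact ⟨p, hp, q, hpq, hqr⟩

theorem union [DecidableEq α] [DecidableEq β] (h : LiftRel T s t) (h' : LiftRel T s' t') :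
    LiftRel T (s ∪ s') (t ∪ t') := by
  refine ⟨fun p hp => ?_, fun q hq => ?_⟩
  · rcases mem_union.1 hp with hp | hp
    · exact (h.1 p hp).imp fun _ ⟨hq, hpq⟩ => ⟨mem_union_left _ hq, hpq⟩
    · exact (h'.1 p hp).imp fun _ ⟨hq, hpq⟩ => ⟨mem_union_right _ hq, hpq⟩
  · rcases mem_union.1 hq with hq | hq
    · exact (h.2 q hq).imp fun _ ⟨hp, hpq⟩ => ⟨mem_union_left _ hp, hpq⟩
    · exact (h'.2 q hq).imp fun _ ⟨hp, hpq⟩ => ⟨mem_union_right _ hp, hpq⟩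

theorem image [DecidableEq γ] [DecidableEq δ] {U : γ → δ → Prop} {f : α → γ} {g : β → δ}
    (hfg : ∀ p q, T p q → U (f p) (g q)) (h : LiftRel T s t) :
    LiftRel U (s.image f) (t.image g) := by
  simp only [LiftRel, forall_mem_image, exists_mem_image]
  exact ⟨fun p hp => (h.1 p hp).imp fun _ ⟨hq, hpq⟩ => ⟨hq, hfg _ _ hpq⟩,
    fun q hq => (h.2 q hq).imp fun _ ⟨hp, hpq⟩ => ⟨hp, hfg _ _ hpq⟩⟩

end LiftRel

end Finset

open Finset (LiftRel)

section Chart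

variable {Act X Y Z : Type}

def TrRel (R : X → Y → Prop) (p : Act × Option X) (q : Act × Option Y) : Prop :=
  p.1 = q.1 ∧ Option.Rel R p.2 q.2

namespace TrRel

theorem mono {R R' : X → Y → Prop} (hR : ∀ x y, R x y → R' x y) :
    ∀ {p : Act × Option X} {q : Act × Option Y}, TrRel R p q → TrRel R' p q
  | (_, _), (_, _), ⟨hpq, .none⟩ => ⟨hpq, .none⟩
  | (_, _), (_, _), ⟨hpq, .some h⟩ => ⟨hpq, .some (hR _ _ h)⟩

theorem refl {R : X → X → Prop} (hR : ∀ x, R x x) : ∀ p : Act × Option X, TrRel R p p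
  | (_, none) => ⟨rfl, .none⟩
  | (_, some x) => ⟨rfl, .some (hR x)⟩

theorem comp {R : X → Y → Prop} {S : Y → Z → Prop} :
    ∀ {p : Act × Option X} {r : Act × Option Z},
      Comp (TrRel R) (TrRel S) p r → TrRel (Comp R S) p r
  | (_, _), (_, _), ⟨(_, _), ⟨hpq, .none⟩, ⟨hqr, .none⟩⟩ => ⟨hpq.trans hqr, .none⟩
  | (_, _), (_, _), ⟨(_, _), ⟨hpq, .some hR⟩, ⟨hqr, .some hS⟩⟩ => ⟨hpq.trans hqr, .some ⟨_, hR, hS⟩⟩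

end TrRel

theorem isBisim_iff_liftRel {C : Chart Act X} {D : Chart Act Y} {R : X → Y → Prop} :
    IsBisim C D R ↔ ∀ x y, R x y → LiftRel (TrRel R) (C.tr x) (D.tr y) := by
  constructor
  · intro hR x y hxy
    refine ⟨fun ⟨a, o⟩ hp => ?_, fun ⟨a, o⟩ hq => ?_⟩
    all_goals obtain ⟨hnone, hfwd, hbwd⟩ := hR x y hxy a
    · cases o with
      | none => exact ⟨(a, none), hnone.1 hp, rfl, .none⟩
      | some x' =>
        obtain ⟨y', hy', h⟩ := hfwd x' hp
        exact ⟨(a, some y'), hy', rfl, .some h⟩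
    · cases o with
      | none => exact ⟨(a, none), hnone.2 hq, rfl, .none⟩
      | some y' =>
        obtain ⟨x', hx', h⟩ := hbwd y' hq
        exact ⟨(a, some x'), hx', rfl, .some h⟩
  · intro h x y hxy a
    obtain ⟨hfwd, hbwd⟩ := h x y hxy
    refine ⟨⟨fun hx => ?_, fun hy => ?_⟩, fun x' hx' => ?_, fun y' hy' => ?_⟩
    · obtain ⟨⟨b, o⟩, ho, rfl, hr⟩ := hfwd _ hx
      cases hr
      exact ho
    · obtain ⟨⟨b, o⟩, ho, rfl, hr⟩ := hbwd _ hy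
      cases hr
      exact ho
    · obtain ⟨⟨b, o⟩, ho, rfl, hr⟩ := hfwd _ hx'
      cases hr with
      | some h => exact ⟨_, ho, h⟩
    · obtain ⟨⟨b, o⟩, ho, rfl, hr⟩ := hbwd _ hy'
      cases hr with
      | some h => exact ⟨_, ho, h⟩

theorem IsBisim.flip {C : Chart Act X} {D : Chart Act Y} {R : X → Y → Prop}
    (hR : IsBisim C D R) : IsBisim D C (flip R) := fun y x hxy a =>
  let ⟨hnone, hfwd, hbwd⟩ := hR x y hxy a
  ⟨hnone.symm, hbwd, hfwd⟩

theorem IsBisim.comp {C : Chart Act X} {D : Chart Act Y} {E : Chart Act Z} {R : X → Y → Prop}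
    {S : Y → Z → Prop} (hR : IsBisim C D R) (hS : IsBisim D E S) :
    IsBisim C E (Comp R S) := by
  rw [isBisim_iff_liftRel] at *
  rintro x z ⟨y, hxy, hyz⟩
  exact ((hR x y hxy).comp (hS y z hyz)).mono fun _ _ => TrRel.comp

namespace Bisimilar

variable {C : Chart Act X} {D : Chart Act Y} {E : Chart Act Z} {x : X} {y : Y} {z : Z}

theorem refl (x : X) : Bisimilar C C x x :=
  ⟨Eq, fun _ _ hxy _ => hxy ▸ ⟨Iff.rfl, fun x' h => ⟨x', h, rfl⟩, fun y' h => ⟨y', h, rfl⟩⟩, rfl⟩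

theorem symm (h : Bisimilar C D x y) : Bisimilar D C y x :=
  let ⟨R, hR, hxy⟩ := h
  ⟨flip R, hR.flip, hxy⟩

theorem trans (h : Bisimilar C D x y) (h' : Bisimilar D E y z) : Bisimilar C E x z :=
  let ⟨R, hR, hxy⟩ := h
  let ⟨S, hS, hyz⟩ := h'
  ⟨Comp R S, hR.comp hS, y, hxy, hyz⟩

theorem liftRel (h : Bisimilar C D x y) :
    LiftRel (TrRel (Bisimilar C D)) (C.tr x) (D.tr y) :=
  let ⟨R, hR, hxy⟩ := h
  (isBisim_iff_liftRel.1 hR x y hxy).mono fun _ _ => TrRel.mono fun _ _ h => ⟨R, hR, h⟩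

end Bisimilar

def UpToBisim (C : Chart Act X) (R : X → X → Prop) : X → X → Prop :=
  Comp (Bisimilar C C) (Comp (ReflGen R) (Bisimilar C C))

def IsBisimUpToBisim (C : Chart Act X) (R : X → X → Prop) : Prop :=
  ∀ x y, R x y → LiftRel (TrRel (UpToBisim C R)) (C.tr x) (C.tr y)

variable {C : Chart Act X} {R : X → X → Prop}

namespace UpToBisim

theorem of_bisimilar {x y : X} (h : Bisimilar C C x y) : UpToBisim C R x y :=
  ⟨x, .refl x, x, .refl, h⟩

theorem of_rel {x y : X} (h : R x y) : UpToBisim C R x y :=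
  ⟨x, .refl x, y, .single h, .refl y⟩

theorem refl (x : X) : UpToBisim C R x x :=
  of_bisimilar (.refl x)

end UpToBisim

theorem Bisimilar.liftRel_upToBisim {x y : X} (h : Bisimilar C C x y) :
    LiftRel (TrRel (UpToBisim C R)) (C.tr x) (C.tr y) :=
  h.liftRel.mono fun _ _ => TrRel.mono fun _ _ => UpToBisim.of_bisimilar

namespace IsBisimUpToBisim

theorem isBisim (hR : IsBisimUpToBisim C R) : IsBisim C C (UpToBisim C R) := by
  rw [isBisim_iff_liftRel]
  rintro x y ⟨x₀, hx, y₀, hR₀, hy⟩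
  have h₀ : LiftRel (TrRel (UpToBisim C R)) (C.tr x₀) (C.tr y₀) := by
    cases hR₀ with
    | refl => exact LiftRel.refl (TrRel.refl UpToBisim.refl) _
    | single h => exact hR _ _ h
  have absorb : ∀ u v, Comp (Bisimilar C C) (Comp (UpToBisim C R) (Bisimilar C C)) u v →
      UpToBisim C R u v :=
    fun _ _ ⟨_, hu, _, ⟨u₁, hu₁, v₁, hR₁, hv₁⟩, hv⟩ =>
      ⟨u₁, hu.trans hu₁, v₁, hR₁, hv₁.trans hv⟩
  exact (hx.liftRel.comp (h₀.comp hy.liftRel)).mono fun _ _ ⟨q, hpq, hqr⟩ =>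
    (TrRel.comp ⟨q, hpq, TrRel.comp hqr⟩).mono absorb

theorem bisimilar (hR : IsBisimUpToBisim C R) {x y : X} (hxy : R x y) : Bisimilar C C x y :=
  ⟨_, hR.isBisim, UpToBisim.of_rel hxy⟩

end IsBisimUpToBisim

theorem bisimilar_of_tr_eq {x y : X} (h : C.tr x = C.tr y) : Bisimilar C C x y :=
  IsBisimUpToBisim.bisimilar (R := fun u v => C.tr u = C.tr v)
    (fun u _ huv => huv ▸ LiftRel.refl (TrRel.refl UpToBisim.refl) (C.tr u)) h

end Chart

namespace StExp

variable {Act : Type} [DecidableEq Act]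

theorem liftRel_tr_mul {S S' : StExp Act → StExp Act → Prop} {x x' y y' : StExp Act}
    (hx : LiftRel (TrRel S) x.tr x'.tr) (hy : S' y y')
    (hS : ∀ t t', S t t' → S' (t.mul y) (t'.mul y')) :
    LiftRel (TrRel S') (x.mul y).tr (x'.mul y').tr :=
  hx.image fun
    | (_, none), (_, none), ⟨hab, .none⟩ => ⟨hab, .some hy⟩
    | (_, some _), (_, some _), ⟨hab, .some h⟩ => ⟨hab, .some (hS _ _ h)⟩

local notation:50 r " ∼ " s => Bisimilar (synChart _) (synChart _) r s

theorem bisimilar_mul_assoc (x y z : StExp Act) : (x.mul y).mul z ∼ x.mul (y.mul z) := by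
  let R : StExp Act → StExp Act → Prop := fun u v =>
    ∃ p q w : StExp Act, u = (p.mul q).mul w ∧ v = p.mul (q.mul w)
  have hR : IsBisimUpToBisim (synChart Act) R := by
    rintro _ _ ⟨p, q, w, rfl, rfl⟩
    show LiftRel _ ((p.mul q).mul w).tr (p.mul (q.mul w)).tr
    simp only [tr, Finset.image_image]
    refine (LiftRel.refl (T := Eq) (fun _ => rfl) p.tr).image ?_
    rintro ⟨_, o⟩ _ rfl
    refine ⟨rfl, .some ?_⟩
    cases o with
    | none => exact UpToBisim.refl _
    | some t => exact UpToBisim.of_rel ⟨t, q, w, rfl, rfl⟩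
  exact hR.bisimilar ⟨x, y, z, rfl, rfl⟩

theorem bisimilar_add_congr {x x' y y' : StExp Act} (hx : x ∼ x') (hy : y ∼ y') :
    x.add y ∼ x'.add y' := by
  let R : StExp Act → StExp Act → Prop := fun u v => u = x.add y ∧ v = x'.add y'
  have hR : IsBisimUpToBisim (synChart Act) R := by
    rintro _ _ ⟨rfl, rfl⟩
    exact hx.liftRel_upToBisim.union hy.liftRel_upToBisim
  exact hR.bisimilar ⟨rfl, rfl⟩

theorem bisimilar_mul_congr {x x' y y' : StExp Act} (hx : x ∼ x') (hy : y ∼ y') :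
    x.mul y ∼ x'.mul y' := by
  let R : StExp Act → StExp Act → Prop := fun u v =>
    ∃ s s' : StExp Act, (s ∼ s') ∧ u = s.mul y ∧ v = s'.mul y'
  have hR : IsBisimUpToBisim (synChart Act) R := by
    rintro _ _ ⟨s, s', hs, rfl, rfl⟩
    exact liftRel_tr_mul hs.liftRel (UpToBisim.of_bisimilar hy)
      fun t t' ht => UpToBisim.of_rel ⟨t, t', ht, rfl, rfl⟩
  exact hR.bisimilar ⟨x, x', hx, rfl, rfl⟩

theorem bisimilar_star_congr {x x' y y' : StExp Act} (hx : x ∼ x') (hy : y ∼ y') :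
    x.star y ∼ x'.star y' := by
  let R : StExp Act → StExp Act → Prop := fun u v =>
    (u = x.star y ∧ v = x'.star y') ∨
      ∃ s s' : StExp Act, (s ∼ s') ∧ u = s.mul (x.star y) ∧ v = s'.mul (x'.star y')
  have hmul : ∀ s s' : StExp Act, (s ∼ s') → LiftRel (TrRel (UpToBisim (synChart Act) R))
      (s.mul (x.star y)).tr (s'.mul (x'.star y')).tr := fun s s' hs =>
    liftRel_tr_mul hs.liftRel (UpToBisim.of_rel (.inl ⟨rfl, rfl⟩))
      fun t t' ht => UpToBisim.of_rel (.inr ⟨t, t', ht, rfl, rfl⟩)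
  have hR : IsBisimUpToBisim (synChart Act) R := by
    rintro _ _ (⟨rfl, rfl⟩ | ⟨s, s', hs, rfl, rfl⟩)
    -- `(x.star y).tr` unfolds to `(x.mul (x.star y)).tr ∪ y.tr`
    · exact (hmul x x' hx).union hy.liftRel_upToBisim
    · exact hmul s s' hs
  exact hR.bisimilar (.inl ⟨rfl, rfl⟩)

theorem bisimilar_star_of_bisimilar_mul_add {x y z : StExp Act} (hx : x ∼ (y.mul x).add z) :
    x ∼ y.star z := by
  let R : StExp Act → StExp Act → Prop := fun u v =>
    (u = (y.mul x).add z ∧ v = y.star z) ∨ ∃ s : StExp Act, u = s.mul x ∧ v = s.mul (y.star z)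
  have hmul : ∀ s : StExp Act, LiftRel (TrRel (UpToBisim (synChart Act) R))
      (s.mul x).tr (s.mul (y.star z)).tr := fun s =>
    liftRel_tr_mul (LiftRel.refl (TrRel.refl (R := Eq) fun _ => rfl) s.tr)
      -- `x ∼ y·x + z` and `(y·x + z, y*z) ∈ R`
      ⟨_, hx, _, .single (.inl ⟨rfl, rfl⟩), .refl _⟩
      fun t _ ht => ht ▸ UpToBisim.of_rel (.inr ⟨t, rfl, rfl⟩)
  have hR : IsBisimUpToBisim (synChart Act) R := by
    rintro _ _ (⟨rfl, rfl⟩ | ⟨s, rfl, rfl⟩)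
    · exact (hmul y).union (LiftRel.refl (TrRel.refl UpToBisim.refl) z.tr)
    · exact hmul s
  exact hx.trans (hR.bisimilar (.inl ⟨rfl, rfl⟩))

end StExp

open StExp in
/-- Soundness of `SL*`: provably equivalent 1-free star expressions are bisimilar
as states of the syntactic chart. -/
theorem soundness_SLstar {Act : Type} [DecidableEq Act] (r1 r2 : StExp Act)
    (h : SLEq r1 r2) : Bisimilar (synChart Act) (synChart Act) r1 r2 := by
  induction h with
  | add_comm x y => exact bisimilar_of_tr_eq (Finset.union_comm x.tr y.tr)
  | add_assoc x y z => exact bisimilar_of_tr_eq (Finset.union_assoc x.tr y.tr z.tr)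
  | add_idem x => exact bisimilar_of_tr_eq (Finset.union_self x.tr)
  | add_zero x => exact bisimilar_of_tr_eq (Finset.union_empty x.tr)
  | right_distrib => exact bisimilar_of_tr_eq (Finset.image_union _ _)
  | zero_mul => exact bisimilar_of_tr_eq (Finset.image_empty _)
  | star_unfold => exact bisimilar_of_tr_eq rfl
  | mul_assoc x y z => exact bisimilar_mul_assoc x y z
  | fixpoint _ ih => exact bisimilar_star_of_bisimilar_mul_add ih
  | refl x => exact .refl x
  | symm _ ih => exact ih.symm
  | trans _ _ ih₁ ih₂ => exact ih₁.trans ih₂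
  | add_congr _ _ ih₁ ih₂ => exact bisimilar_add_congr ih₁ ih₂
  | mul_congr _ _ ih₁ ih₂ => exact bisimilar_mul_congr ih₁ ih₂
  | star_congr _ _ ih₁ ih₂ => exact bisimilar_star_congr ih₁ ih₂
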